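/- Let A_c : ℝⁿ → ℝⁿ and B : ℝᵐ → ℝⁿ be linear, W ⊆ ℝⁿ, and X ⊆ ℝⁿ. Suppose x, x̄ : ℕ → ℝⁿ satisfy x[0] = x̄[0], x[k+1] = A_c x[k] + B c₀[k] + w[k] with w[k] ∈ W, and x̄[k+1] = A_c x̄[k] + B c₀[k]. Define Φ_0 = {0} and Φ_n = ⨁_{i=0}^{n−1} (A_c^i '' W) for n ≥ 1, and the Pontryagin set difference X ⊖ S = { v : v + s ∈ X for all s ∈ S }. If x̄[n] ∈ X ⊖ Φ_n for all n, then x[n] ∈ X for all n. -/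
import Mathlib

open Pointwise

/-- Overall robust constraint-satisfaction guarantee of tube-based MPC: if the nominal
trajectory stays in the tightened sets `X ⊖ Φ_n`, where `Φ_n = ⨁_{i=0}^{n-1} A_c^i '' W`
(with `Φ_0 = {0}`, the empty Minkowski sum of sets), then the actual trajectory stays
in `X`. -/
theorem tube_mpc_robust_constraints {n m : ℕ}
    (Ac : (Fin n → ℝ) →ₗ[ℝ] (Fin n → ℝ))
    (B : (Fin m → ℝ) →ₗ[ℝ] (Fin n → ℝ))
    (W X : Set (Fin n → ℝ))
    (x xbar : ℕ → (Fin n → ℝ)) (c₀ : ℕ → (Fin m → ℝ)) (w : ℕ → (Fin n → ℝ))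
    (h0 : x 0 = xbar 0)
    (hx : ∀ k, x (k + 1) = Ac (x k) + B (c₀ k) + w k)
    (hw : ∀ k, w k ∈ W)
    (hxbar : ∀ k, xbar (k + 1) = Ac (xbar k) + B (c₀ k))
    (htight : ∀ N : ℕ,
      xbar N ∈ {v : Fin n → ℝ |
        ∀ s ∈ ∑ i ∈ Finset.range N, (⇑(Ac ^ i) '' W), v + s ∈ X}) :
    ∀ N : ℕ, x N ∈ X := by
  have key : ∀ N : ℕ,
      x N = xbar N + ∑ i ∈ Finset.range N, (Ac ^ i) (w (N - 1 - i)) := by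
    intro N
    induction N with
    | zero => simp [h0]
    | succ N ih =>
      rw [hx, hxbar, ih,
        Finset.sum_range_succ' (fun i => (Ac ^ i) (w (N + 1 - 1 - i)))]
      simp only [pow_zero, Module.End.one_apply, pow_succ']
      have hidx : ∀ i, N + 1 - 1 - (i + 1) = N - 1 - i := by omega
      simp only [hidx]
      simp only [Module.End.mul_apply]
      rw [map_add, ← map_sum]
      simp only [Nat.add_sub_cancel]
      abel
  intro N
  rw [key N]
  apply htight N
  exact Set.finset_sum_mem_finset_sum _ _ _ (fun i _ => Set.mem_image_of_mem _ (hw _))
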